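/- arXiv:1207.3610 — 6 statements merged into one kernel-verified Lean document; each statement's English description precedes it below -/
import Mathlib

section
/- Let $(Y_n)_{n\ge 1}$ be i.i.d. real random variables and define the autoregressive process $X_n = \sum_{k=1}^p a_k X_{n-k} + Y_n$ for $n \ge 1$ (with $X_n = 0$ for $n \le 0$). If $a_1 \le 0, \dots, a_p \le 0$, then for every $N \ge 1$, $\Pr(\max_{1\le n\le N} X_n \le 0) \le \Pr(Y_1 \le 0)^N$. -/
/-! If all coefficients are nonpositive and `X₁, …, X_N ≤ 0`, each autoregressive term
`a k * X (n - k)` is nonnegative, so `Y n = X n - ∑ a k * X (n - k) ≤ 0` for `n ≤ N`.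
Hence the event is contained in `{Y₁ ≤ 0, …, Y_N ≤ 0}`, whose probability is
`ℙ(Y₁ ≤ 0) ^ N` by independence and identical distribution. -/

open MeasureTheory ProbabilityTheory Finset

lemma innovation_nonpos_of_autoregressive_nonpos {p N : ℕ} {a x y : ℕ → ℝ}
    (ha : ∀ k ∈ Icc 1 p, a k ≤ 0) (hx0 : x 0 = 0)
    (hrec : ∀ n, 1 ≤ n → x n = ∑ k ∈ Icc 1 p, a k * x (n - k) + y n)
    (hx : ∀ n ∈ Icc 1 N, x n ≤ 0) : ∀ n ∈ Icc 1 N, y n ≤ 0 := by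
  have hx_le : ∀ m ≤ N, x m ≤ 0 := by
    intro m hm
    rcases Nat.eq_zero_or_pos m with rfl | hm0
    · exact hx0.le
    · exact hx m (mem_Icc.mpr ⟨hm0, hm⟩)
  intro n hn
  obtain ⟨hn1, hnN⟩ := mem_Icc.mp hn
  have hsum : 0 ≤ ∑ k ∈ Icc 1 p, a k * x (n - k) :=
    sum_nonneg fun k hk => mul_nonneg_of_nonpos_of_nonpos (ha k hk) (hx_le _ (by omega))
  linarith [hrec n hn1, hx n hn]

lemma ProbabilityTheory.iIndepFun.measure_biInter_preimage_eq_pow {Ω ι β : Type*} [MeasurableSpace Ω]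
    [MeasurableSpace β] {μ : Measure Ω} {Y : ι → Ω → β} (hindep : iIndepFun Y μ)
    {s : Finset ι} {j : ι} (hident : ∀ i ∈ s, IdentDistrib (Y i) (Y j) μ μ)
    {S : Set β} (hS : MeasurableSet S) :
    μ (⋂ i ∈ s, Y i ⁻¹' S) = μ (Y j ⁻¹' S) ^ #s := by
  rw [hindep.meas_biInter fun i _ => ⟨S, hS, rfl⟩, ← prod_const]
  exact prod_congr rfl fun i hi => (hident i hi).measure_mem_eq hS

theorem stmt_5_general {Ω : Type*} [MeasureSpace Ω] [IsProbabilityMeasure (ℙ : Measure Ω)]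
    (p : ℕ) (a : ℕ → ℝ) (ha : ∀ k ∈ Finset.Icc 1 p, a k ≤ 0)
    (Y : ℕ → Ω → ℝ)
    (hindep : iIndepFun Y ℙ)
    (hident : ∀ n, IdentDistrib (Y n) (Y 1) ℙ ℙ)
    (X : ℕ → Ω → ℝ) (hX0 : ∀ ω, X 0 ω = 0)
    (hXrec : ∀ n, 1 ≤ n → ∀ ω, X n ω = ∑ k ∈ Finset.Icc 1 p, a k * X (n - k) ω + Y n ω) :
    ∀ N, 1 ≤ N →
      ℙ {ω | ∀ n ∈ Finset.Icc 1 N, X n ω ≤ 0} ≤ ℙ {ω | Y 1 ω ≤ 0} ^ N := by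
  intro N _
  have hsub : {ω | ∀ n ∈ Icc 1 N, X n ω ≤ 0} ⊆ ⋂ n ∈ Icc 1 N, Y n ⁻¹' Set.Iic 0 := by
    intro ω hω
    simpa using innovation_nonpos_of_autoregressive_nonpos (x := (X · ω)) (y := (Y · ω))
      ha (hX0 ω) (fun n hn => hXrec n hn ω) hω
  calc ℙ {ω | ∀ n ∈ Icc 1 N, X n ω ≤ 0}
      ≤ ℙ (⋂ n ∈ Icc 1 N, Y n ⁻¹' Set.Iic 0) := measure_mono hsub
    _ = ℙ {ω | Y 1 ω ≤ 0} ^ N := by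
      rw [hindep.measure_biInter_preimage_eq_pow (fun n _ => hident n) measurableSet_Iic,
        Nat.card_Icc, Nat.add_sub_cancel]
      rfl

theorem stmt_5 {Ω : Type*} [MeasureSpace Ω] [IsProbabilityMeasure (ℙ : Measure Ω)]
    (p : ℕ) (hp : 1 ≤ p) (a : ℕ → ℝ) (ha : ∀ k ∈ Finset.Icc 1 p, a k ≤ 0)
    (Y : ℕ → Ω → ℝ) (hmeas : ∀ n, Measurable (Y n))
    (hindep : iIndepFun Y ℙ)
    (hident : ∀ n, IdentDistrib (Y n) (Y 1) ℙ ℙ)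
    (X : ℕ → Ω → ℝ) (hX0 : ∀ ω, X 0 ω = 0)
    (hXrec : ∀ n, 1 ≤ n → ∀ ω, X n ω = ∑ k ∈ Finset.Icc 1 p, a k * X (n - k) ω + Y n ω) :
    ∀ N, 1 ≤ N →
      ℙ {ω | ∀ n ∈ Finset.Icc 1 N, X n ω ≤ 0} ≤ ℙ {ω | Y 1 ω ≤ 0} ^ N :=
  stmt_5_general p a ha Y hindep hident X hX0 hXrec
end

section
/- Let $\rho \in (-1,1)$, $\rho \ne 0$, and let $(Y_n)_{n\ge 1}$ be i.i.d. with characteristic function $\varphi$ satisfying: there exist $\delta \in (0, |\rho|)$ and $t_0 > 0$ with $|\varphi(t)| \le \delta$ for all $|t| \ge t_0$. Then the characteristic function $\tilde\varphi$ of $Z = \sum_{n=1}^\infty \rho^n Y_n$ satisfies $|\tilde\varphi(t)| \le C |t|^{-\alpha}$ for all $|t| \ge t_0$, where $\alpha = \log(1/\delta)/\log(1/|\rho|) > 1$ and $C$ depends only on $t_0, \rho, \delta$. In particular, $\tilde\varphi$ is absolutely integrable on $\mathbb{R}$. -/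
open MeasureTheory ProbabilityTheory Filter Finset Complex

/-!
Write `T_N = ∑_{n > N} ρ^n Y_n` for the tails of `Z`. The series converges almost surely: the
moment bound makes `P(|Y_n| ≥ r^n)` geometric for every `r > 1`, so Borel–Cantelli applies with
`1 < r < 1/|ρ|`. Independence then factors the characteristic function as
`φ̃(t) = φ(ρ t) ⋯ φ(ρ^N t) · E[exp(i t T_N)]`. Choosing `N` maximal with `|ρ|^N |t| ≥ t₀`, every
factor has modulus at most `δ`, so `|φ̃(t)| ≤ δ^N`, and `δ^N ≤ (t₀ / |t|)^α / δ` because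
`δ = |ρ|^α`. Since `α > 1` and `|φ̃| ≤ 1`, this decay makes `φ̃` integrable.
-/

theorem exists_pow_mul_mem_Ico {b t₀ u : ℝ} (hb₀ : 0 < b) (hb₁ : b < 1) (ht₀ : 0 < t₀)
    (hu : t₀ ≤ u) : ∃ N : ℕ, t₀ ≤ b ^ N * u ∧ b ^ (N + 1) * u < t₀ := by
  obtain ⟨N, hle, hlt⟩ := exists_nat_pow_near ((one_le_div ht₀).2 hu) ((one_lt_inv₀ hb₀).2 hb₁)
  rw [inv_pow, ← one_div, div_le_div_iff₀ (pow_pos hb₀ N) ht₀, one_mul] at hle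
  rw [inv_pow, ← one_div, div_lt_div_iff₀ ht₀ (pow_pos hb₀ _), one_mul] at hlt
  exact ⟨N, by linarith, by linarith⟩

theorem pow_le_div_mul_rpow_neg {b δ α t₀ u : ℝ} {N : ℕ} (hb : 0 < b) (hα : 0 ≤ α)
    (hbα : b ^ α = δ) (hu : 0 < u) (hN : b ^ (N + 1) * u < t₀) :
    δ ^ N ≤ t₀ ^ α / δ * u ^ (-α) := by
  have hδ : 0 < δ := hbα ▸ Real.rpow_pos_of_pos hb α
  have hpow : δ ^ (N + 1) ≤ t₀ ^ α / u ^ α := by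
    rw [← hbα, Real.rpow_pow_comm hb.le, ← Real.div_rpow (hN.trans' (by positivity)).le hu.le]
    exact Real.rpow_le_rpow (by positivity) ((le_div_iff₀ hu).2 hN.le) hα
  calc δ ^ N = δ ^ (N + 1) / δ := by rw [pow_succ, mul_div_cancel_right₀ _ hδ.ne']
    _ ≤ t₀ ^ α / u ^ α / δ := div_le_div_of_nonneg_right hpow hδ.le
    _ = t₀ ^ α / δ * u ^ (-α) := by rw [Real.rpow_neg hu.le]; ring

theorem rpow_neg_le_rpow_mul_rpow_neg {x y c α : ℝ} (hx : 0 < x) (hy : 0 < y) (hα : 0 ≤ α)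
    (hyx : y ≤ c * x) : x ^ (-α) ≤ c ^ α * y ^ (-α) := by
  have hc : 0 < c := pos_of_mul_pos_left (hy.trans_le hyx) hx.le
  rw [Real.rpow_neg hx.le, Real.rpow_neg hy.le, ← Real.inv_rpow hx.le, ← div_eq_mul_inv,
    ← Real.div_rpow hc.le hy.le]
  refine Real.rpow_le_rpow (by positivity) ?_ hα
  rwa [inv_eq_one_div, div_le_div_iff₀ hx hy, one_mul]

theorem integrable_of_norm_le_rpow_neg {F : Type*} [NormedAddCommGroup F] {f : ℝ → F}
    {K C α t₀ : ℝ} (hf : AEStronglyMeasurable f) (ht₀ : 0 < t₀) (hα : 1 < α)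
    (hK : ∀ t, ‖f t‖ ≤ K) (hC : ∀ t, t₀ ≤ |t| → ‖f t‖ ≤ C * |t| ^ (-α)) : Integrable f := by
  have hα₀ : 0 ≤ α := zero_le_one.trans hα.le
  have hK₀ : 0 ≤ K := (norm_nonneg _).trans (hK 0)
  have hC₀ : 0 ≤ C := nonneg_of_mul_nonneg_left ((norm_nonneg _).trans (hC t₀ (le_abs_self t₀)))
    (by rw [abs_of_pos ht₀]; positivity)
  refine ((integrable_one_add_norm (E := ℝ) (μ := volume) (by simpa using hα)).const_mul
    (K * (1 + t₀) ^ α + C * ((1 + t₀) / t₀) ^ α)).mono' hf (ae_of_all _ fun t => ?_)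
  have hA₀ : 0 ≤ (1 + t₀) ^ α * (1 + |t|) ^ (-α) := by positivity
  have hB₀ : 0 ≤ ((1 + t₀) / t₀) ^ α * (1 + |t|) ^ (-α) := by positivity
  rw [Real.norm_eq_abs, add_mul, mul_assoc, mul_assoc]
  rcases lt_or_ge |t| t₀ with ht | ht
  · have hA : 1 ≤ (1 + t₀) ^ α * (1 + |t|) ^ (-α) := by
      simpa using rpow_neg_le_rpow_mul_rpow_neg one_pos (by positivity) hα₀
        (by linarith : 1 + |t| ≤ (1 + t₀) * 1)
    calc ‖f t‖ ≤ K * 1 := by simpa using hK t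
      _ ≤ K * ((1 + t₀) ^ α * (1 + |t|) ^ (-α)) := mul_le_mul_of_nonneg_left hA hK₀
      _ ≤ _ := le_add_of_nonneg_right (mul_nonneg hC₀ hB₀)
  · have hB : |t| ^ (-α) ≤ ((1 + t₀) / t₀) ^ α * (1 + |t|) ^ (-α) := by
      refine rpow_neg_le_rpow_mul_rpow_neg (ht₀.trans_le ht) (by positivity) hα₀ ?_
      rw [div_mul_eq_mul_div, le_div_iff₀ ht₀]
      nlinarith
    calc ‖f t‖ ≤ C * |t| ^ (-α) := hC t ht
      _ ≤ C * (((1 + t₀) / t₀) ^ α * (1 + |t|) ^ (-α)) := mul_le_mul_of_nonneg_left hB hC₀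
      _ ≤ _ := le_add_of_nonneg_left (mul_nonneg hK₀ hA₀)

section Summability

variable {Ω : Type*} {mΩ : MeasurableSpace Ω} {μ : Measure Ω}

theorem tsum_measure_pow_le_abs_ne_top {X : Ω → ℝ} {a r : ℝ} (ha : 0 < a)
    (hX : Integrable (fun ω => |X ω| ^ a) μ) (hr : 1 < r) :
    ∑' n : ℕ, μ {ω | r ^ n ≤ |X ω|} ≠ ⊤ := by
  set q := ENNReal.ofReal (r ^ a)
  have hq : 1 < q := by
    rw [← ENNReal.ofReal_one]
    exact (ENNReal.ofReal_lt_ofReal_iff (by positivity)).2 (Real.one_lt_rpow hr ha)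
  have hle : ∀ n : ℕ, μ {ω | r ^ n ≤ |X ω|} ≤ (∫⁻ ω, ENNReal.ofReal (|X ω| ^ a) ∂μ) * q⁻¹ ^ n := by
    intro n
    calc μ {ω | r ^ n ≤ |X ω|} ≤ μ {ω | q ^ n ≤ ENNReal.ofReal (|X ω| ^ a)} := by
          refine measure_mono fun ω (hω : r ^ n ≤ |X ω|) => ?_
          rw [Set.mem_ofPred_eq, ← ENNReal.ofReal_pow (by positivity), ← Real.rpow_natCast,
            ← Real.rpow_mul (by positivity), mul_comm, Real.rpow_mul (by positivity),
            Real.rpow_natCast]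
          exact ENNReal.ofReal_le_ofReal (Real.rpow_le_rpow (by positivity) hω ha.le)
      _ ≤ (∫⁻ ω, ENNReal.ofReal (|X ω| ^ a) ∂μ) / q ^ n :=
          meas_ge_le_lintegral_div hX.1.aemeasurable.ennreal_ofReal
            (pow_ne_zero _ (zero_lt_one.trans hq).ne') (ENNReal.pow_ne_top ENNReal.ofReal_ne_top)
      _ = _ := by rw [div_eq_mul_inv, ENNReal.inv_pow]
  refine ne_top_of_le_ne_top ?_ (ENNReal.tsum_le_tsum hle)
  rw [ENNReal.tsum_mul_left, ENNReal.tsum_geometric]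
  exact ENNReal.mul_ne_top hX.lintegral_lt_top.ne
    (ENNReal.inv_ne_top.2 (tsub_pos_of_lt (ENNReal.inv_lt_one.2 hq)).ne')

theorem ae_eventually_abs_lt_pow [IsFiniteMeasure μ] {Y : ℕ → Ω → ℝ} {X : Ω → ℝ}
    (hident : ∀ n, IdentDistrib (Y n) X μ μ) {a r : ℝ} (ha : 0 < a)
    (hX : Integrable (fun ω => |X ω| ^ a) μ) (hr : 1 < r) :
    ∀ᵐ ω ∂μ, ∀ᶠ n in atTop, |Y n ω| < r ^ n := by
  have hsame : ∀ n : ℕ, μ {ω | r ^ n ≤ |Y n ω|} = μ {ω | r ^ n ≤ |X ω|} := fun n =>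
    (hident n).measure_mem_eq (s := {x | r ^ n ≤ |x|})
      (measurableSet_le measurable_const measurable_abs)
  filter_upwards [ae_eventually_notMem (s := fun n => {ω | r ^ n ≤ |Y n ω|})
    (by simpa only [hsame] using tsum_measure_pow_le_abs_ne_top ha hX hr)] with ω hω
  exact hω.mono fun n hn => not_le.1 hn

theorem summable_mul_of_eventually_abs_lt_pow {ρ r : ℝ} {y : ℕ → ℝ} (hρr : |ρ * r| < 1)
    (hy : ∀ᶠ n in atTop, |y n| < r ^ n) : Summable fun n => ρ ^ n * y n := by
  refine Summable.of_norm_bounded_eventually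
    (summable_geometric_of_lt_one (abs_nonneg _) hρr) ?_
  rw [Nat.cofinite_eq_atTop]
  filter_upwards [hy] with n hn
  rw [norm_mul, norm_pow, Real.norm_eq_abs, Real.norm_eq_abs, abs_mul, mul_pow]
  exact mul_le_mul_of_nonneg_left (hn.le.trans ((le_abs_self _).trans_eq (abs_pow r n)))
    (by positivity)

theorem ae_summable_geometric_mul [IsFiniteMeasure μ] {Y : ℕ → Ω → ℝ} {X : Ω → ℝ}
    (hident : ∀ n, IdentDistrib (Y n) X μ μ) {a : ℝ} (ha : 0 < a)
    (hX : Integrable (fun ω => |X ω| ^ a) μ) {ρ : ℝ} (hρ : |ρ| < 1) :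
    ∀ᵐ ω ∂μ, Summable fun n => ρ ^ n * Y n ω := by
  obtain ⟨s, hρs, hs1⟩ := exists_between hρ
  have hs : 0 < s := (abs_nonneg ρ).trans_lt hρs
  filter_upwards [ae_eventually_abs_lt_pow hident ha hX ((one_lt_inv₀ hs).2 hs1)] with ω hω
  have hρs' : |ρ * s⁻¹| < 1 := by
    rwa [abs_mul, abs_inv, abs_of_pos hs, ← div_eq_mul_inv, div_lt_one hs]
  exact summable_mul_of_eventually_abs_lt_pow hρs' hω

end Summability

section CharFun

variable {Ω E : Type*} {mΩ : MeasurableSpace Ω} {μ : Measure Ω}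
  [NormedAddCommGroup E] [CompleteSpace E] [SecondCountableTopology E]
  [MeasurableSpace E] [BorelSpace E] {X : ℕ → Ω → E}

theorem ProbabilityTheory.iIndepFun.indepFun_tsum_tail (hind : iIndepFun X μ)
    (hX : ∀ n, Measurable (X n)) (N : ℕ) : IndepFun (X N) (fun ω => ∑' n, X (n + (N + 1)) ω) μ := by
  let m : ℕ → MeasurableSpace Ω := fun n => MeasurableSpace.comap (X n) inferInstance
  have hrest : Measurable[⨆ n ∈ ({N} : Set ℕ)ᶜ, m n] fun ω => ∑' n, X (n + (N + 1)) ω := by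
    -- make the sub-σ-algebra the ambient instance, so that `Measurable.tsum` applies to it
    let _ : MeasurableSpace Ω := ⨆ n ∈ ({N} : Set ℕ)ᶜ, m n
    exact Measurable.tsum fun n => (comap_measurable (X _)).mono
      (le_biSup m (show n + (N + 1) ∈ ({N} : Set ℕ)ᶜ by simp; omega)) le_rfl
  rw [IndepFun_iff_Indep]
  exact indep_of_indep_of_le_right
    (indep_of_indep_of_le_left (indep_biSup_compl (fun n => (hX n).comap_le) hind.iIndep {N})
      (le_biSup m (Set.mem_singleton N)))
    hrest.comap_le

variable [InnerProductSpace ℝ E]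

theorem charFun_map_tsum_tail_eq_mul [IsFiniteMeasure μ] (hX : ∀ n, Measurable (X n))
    (hind : iIndepFun X μ) (hsum : ∀ᵐ ω ∂μ, Summable fun n => X n ω) (N : ℕ) :
    charFun (μ.map fun ω => ∑' n, X (n + N) ω) =
      charFun (μ.map (X N)) * charFun (μ.map fun ω => ∑' n, X (n + (N + 1)) ω) := by
  have hsplit : (fun ω => ∑' n, X (n + N) ω) =ᵐ[μ] fun ω => X N ω + ∑' n, X (n + (N + 1)) ω := by
    filter_upwards [hsum] with ω hω
    rw [((summable_nat_add_iff N).2 hω).tsum_eq_zero_add]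
    simp only [zero_add, add_right_comm _ 1 N, add_assoc]
  rw [Measure.map_congr hsplit]
  exact (hind.indepFun_tsum_tail hX N).charFun_map_fun_add_eq_mul
    (hX N).aemeasurable (Measurable.tsum fun n => hX _).aemeasurable

theorem charFun_map_tsum_eq_prod_mul [IsFiniteMeasure μ] (hX : ∀ n, Measurable (X n))
    (hind : iIndepFun X μ) (hsum : ∀ᵐ ω ∂μ, Summable fun n => X n ω) (N : ℕ) (t : E) :
    charFun (μ.map fun ω => ∑' n, X n ω) t =
      (∏ k ∈ range N, charFun (μ.map (X k)) t) * charFun (μ.map fun ω => ∑' n, X (n + N) ω) t := by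
  induction N with
  | zero => simp
  | succ N ih =>
    rw [ih, charFun_map_tsum_tail_eq_mul hX hind hsum N, Pi.mul_apply, prod_range_succ, mul_assoc]

theorem norm_charFun_map_tsum_le_pow [IsProbabilityMeasure μ] (hX : ∀ n, Measurable (X n))
    (hind : iIndepFun X μ) (hsum : ∀ᵐ ω ∂μ, Summable fun n => X n ω) {N : ℕ} {t : E} {δ : ℝ}
    (hδ : ∀ k < N, ‖charFun (μ.map (X k)) t‖ ≤ δ) :
    ‖charFun (μ.map fun ω => ∑' n, X n ω) t‖ ≤ δ ^ N := by
  have hT : Measurable fun ω => ∑' n, X (n + N) ω := Measurable.tsum fun n => hX _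
  have := Measure.isProbabilityMeasure_map hT.aemeasurable (μ := μ)
  rw [charFun_map_tsum_eq_prod_mul hX hind hsum N, norm_mul, norm_prod]
  refine (mul_le_of_le_one_right (by positivity) (norm_charFun_le_one t)).trans ?_
  calc ∏ k ∈ range N, ‖charFun (μ.map (X k)) t‖ ≤ ∏ _k ∈ range N, δ :=
        prod_le_prod (fun _ _ => norm_nonneg _) fun k hk => hδ k (mem_range.1 hk)
    _ = δ ^ N := by rw [prod_const, card_range]

end CharFun

theorem integral_cexp_mul_eq_charFun {Ω : Type*} {mΩ : MeasurableSpace Ω} {μ : Measure Ω}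
    {X : Ω → ℝ} (hX : AEMeasurable X μ) (t : ℝ) :
    ∫ ω, cexp (I * t * X ω) ∂μ = charFun (μ.map X) t := by
  rw [charFun_apply_real, integral_map hX (by fun_prop)]
  simp only [mul_comm I, mul_right_comm _ I]

theorem norm_charFun_map_tsum_geometric_le_pow {Ω : Type*} {mΩ : MeasurableSpace Ω}
    {μ : Measure Ω} [IsProbabilityMeasure μ] {Y : ℕ → Ω → ℝ} (hY : ∀ n, Measurable (Y n))
    (hind : iIndepFun Y μ) {ρ δ t₀ : ℝ} (hρ : |ρ| ≤ 1)
    (hsum : ∀ᵐ ω ∂μ, Summable fun n => ρ ^ (n + 1) * Y (n + 1) ω)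
    (hδ : ∀ n t, t₀ ≤ |t| → ‖charFun (μ.map (Y n)) t‖ ≤ δ) {N : ℕ} {t : ℝ}
    (ht : t₀ ≤ |ρ| ^ N * |t|) :
    ‖charFun (μ.map fun ω => ∑' n, ρ ^ (n + 1) * Y (n + 1) ω) t‖ ≤ δ ^ N := by
  refine norm_charFun_map_tsum_le_pow (X := fun n ω => ρ ^ (n + 1) * Y (n + 1) ω)
    (fun n => (hY _).const_mul _)
    ((hind.precomp (add_left_injective 1)).comp (fun n x => ρ ^ (n + 1) * x)
      fun n => measurable_const_mul _) hsum fun k hk => ?_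
  rw [charFun_map_mul_comp (hY _).aemeasurable]
  refine hδ _ _ (ht.trans ?_)
  rw [abs_mul, abs_pow]
  exact mul_le_mul_of_nonneg_right (pow_le_pow_of_le_one (abs_nonneg ρ) hρ hk) (abs_nonneg t)

theorem stmt_7 {Ω : Type*} [MeasureSpace Ω] [IsProbabilityMeasure (ℙ : Measure Ω)]
    (ρ : ℝ) (hρ1 : ρ ∈ Set.Ioo (-1 : ℝ) 1) (hρ0 : ρ ≠ 0)
    (Y : ℕ → Ω → ℝ) (hmeas : ∀ n, Measurable (Y n))
    (hindep : iIndepFun Y ℙ)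
    (hident : ∀ n, IdentDistrib (Y n) (Y 1) ℙ ℙ)
    (a : ℝ) (ha : 0 < a) (hmom : Integrable (fun ω => |Y 1 ω| ^ a) ℙ)
    (φ : ℝ → ℂ) (hφ : ∀ t, φ t = ∫ ω, Complex.exp (Complex.I * t * Y 1 ω) ∂ℙ)
    (δ t0 : ℝ) (hδ : δ ∈ Set.Ioo (0 : ℝ) |ρ|) (ht0 : 0 < t0)
    (hφδ : ∀ t : ℝ, t0 ≤ |t| → ‖φ t‖ ≤ δ)
    (Z : Ω → ℝ) (hZ : ∀ ω, Z ω = ∑' n : ℕ, ρ ^ (n + 1) * Y (n + 1) ω)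
    (φt : ℝ → ℂ) (hφt : ∀ t, φt t = ∫ ω, Complex.exp (Complex.I * t * Z ω) ∂ℙ)
    (α : ℝ) (hα : α = Real.log (1 / δ) / Real.log (1 / |ρ|)) :
    1 < α ∧
    (∃ C > 0, ∀ t : ℝ, t0 ≤ |t| → ‖φt t‖ ≤ C * |t| ^ (-α)) ∧
    Integrable φt := by
  obtain ⟨hδ₀, hδρ⟩ := hδ
  have hρ₀ : 0 < |ρ| := abs_pos.2 hρ0
  have hρ₁ : |ρ| < 1 := abs_lt.2 hρ1
  rw [one_div, one_div, Real.log_inv, Real.log_inv, neg_div_neg_eq, ← Real.logb] at hα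
  have hα₁ : 1 < α := by
    rw [hα, ← Real.logb_self_eq_one_iff.2 ⟨hρ₀.ne', hρ₁.ne, by linarith⟩]
    exact (Real.logb_lt_logb_iff_of_base_lt_one hρ₀ hρ₁ hρ₀ hδ₀).2 hδρ
  have hρα : |ρ| ^ α = δ := hα ▸ Real.rpow_logb hρ₀ hρ₁.ne hδ₀
  have hZm : Measurable Z := funext hZ ▸ Measurable.tsum fun n => (hmeas _).const_mul _
  have := Measure.isProbabilityMeasure_map hZm.aemeasurable (μ := ℙ)
  have hφY : ∀ n t, charFun ((ℙ : Measure Ω).map (Y n)) t = φ t := fun n t => by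
    rw [(hident n).map_eq, hφ, integral_cexp_mul_eq_charFun (hmeas 1).aemeasurable]
  obtain rfl : φt = charFun ((ℙ : Measure Ω).map Z) :=
    funext fun t => (hφt t).trans (integral_cexp_mul_eq_charFun hZm.aemeasurable t)
  have hsum : ∀ᵐ ω, Summable fun n => ρ ^ (n + 1) * Y (n + 1) ω := by
    filter_upwards [ae_summable_geometric_mul hident ha hmom hρ₁] with ω hω
    exact (summable_nat_add_iff 1).2 hω
  have hdecay : ∀ t : ℝ, t0 ≤ |t| →
      ‖charFun ((ℙ : Measure Ω).map Z) t‖ ≤ t0 ^ α / δ * |t| ^ (-α) := by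
    intro t ht
    rw [funext hZ]
    obtain ⟨N, hN, hN'⟩ := exists_pow_mul_mem_Ico hρ₀ hρ₁ ht0 ht
    refine (norm_charFun_map_tsum_geometric_le_pow hmeas hindep hρ₁.le hsum ?_ hN).trans
      (pow_le_div_mul_rpow_neg hρ₀ (by linarith) hρα (ht0.trans_le ht) hN')
    exact fun n s hs => (hφY n s).symm ▸ hφδ s hs
  exact ⟨hα₁, ⟨_, by positivity, hdecay⟩, integrable_of_norm_le_rpow_neg
    continuous_charFun.aestronglyMeasurable ht0 hα₁ norm_charFun_le_one hdecay⟩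
end

section
/- Let $(Y_n)_{n\ge 1}$ be i.i.d. with $\Pr(Y_1 > 0) > 0$, and let $X$ be the AR(2)-process $X_n = a_1 X_{n-1} + a_2 X_{n-2} + Y_n$ with $a_1 > 0$ and $a_1^2 + 4a_2 < 0$. Then there exists $\lambda > 0$ such that $\Pr(\max_{1\le n\le N} X_n \le 0) \le e^{-\lambda N}$ for all sufficiently large $N$. -/
/-!
Let `b = arCoeff a₁ a₂` solve the homogeneous recursion with `b 0 = 0`, `b 1 = 1`. Since the characteristic roots
are complex and `a₁ > 0`, there is a first `q ≥ 1` with `b (q + 1) ≤ 0`, while `b 1, …, b q > 0`.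
By variation of constants,
`X (m + q) = b (q + 1) X m + a₂ b q X (m - 1) + ∑ i ∈ [1, q], b (q - i + 1) Y (m + i)`,
so if `X m, X (m - 1) ≤ 0` and `Y` is positive on the block `(m, m + q]`, then `X (m + q) > 0`.
Hence on the event `X 1, …, X N ≤ 0` each of the `N / q` disjoint blocks `(k q, (k + 1) q]`
contains some `Y i ≤ 0`, and by independence this event has probability at most
`(1 - p ^ q) ^ (N / q)` with `p = ℙ (Y 1 > 0) > 0`.
-/

open MeasureTheory ProbabilityTheory Finset Function

/-- `arCoeff a₁ a₂ (n + 1)` is the coefficient `c_n` (`c_0 = 1`, `c_1 = a₁`); the shift, giving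
`arCoeff a₁ a₂ 0 = 0`, keeps the variation-of-constants formula free of truncated subtraction. -/
def arCoeff (a₁ a₂ : ℝ) : ℕ → ℝ
  | 0 => 0
  | 1 => 1
  | n + 2 => a₁ * arCoeff a₁ a₂ (n + 1) + a₂ * arCoeff a₁ a₂ n

namespace arCoeff

variable {a₁ a₂ : ℝ}

@[simp] lemma zero : arCoeff a₁ a₂ 0 = 0 := rfl
@[simp] lemma one : arCoeff a₁ a₂ 1 = 1 := rfl
lemma add_two (n : ℕ) :
    arCoeff a₁ a₂ (n + 2) = a₁ * arCoeff a₁ a₂ (n + 1) + a₂ * arCoeff a₁ a₂ n := rfl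
@[simp] lemma two : arCoeff a₁ a₂ 2 = a₁ := by simp [add_two]

/-- While the coefficients stay positive, the ratios `r n = arCoeff (n + 2) / arCoeff (n + 1)`
satisfy `r (n + 1) r n = a₁ r n + a₂ ≤ r n ^ 2 - δ` with `δ = -(a₁ ^ 2 + 4 a₂) / 4 > 0`, so they
start at `a₁` and drop by at least `δ / a₁` at each step. -/
lemma exists_succ_nonpos (ha₁ : 0 < a₁) (hd : a₁ ^ 2 + 4 * a₂ < 0) :
    ∃ n, arCoeff a₁ a₂ (n + 1) ≤ 0 := by
  by_contra! hpos
  set δ := -(a₁ ^ 2 + 4 * a₂) / 4 with hδ_def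
  have hδ : 0 < δ := by linarith
  set r : ℕ → ℝ := fun n => arCoeff a₁ a₂ (n + 2) / arCoeff a₁ a₂ (n + 1)
  have hr_pos (n : ℕ) : 0 < r n := div_pos (hpos (n + 1)) (hpos n)
  have hr_mul (n : ℕ) : r (n + 1) * r n = a₁ * r n + a₂ := by
    have := (hpos n).ne'
    have := (hpos (n + 1)).ne'
    simp only [r, add_two (n + 1)]
    field_simp
  have hr_le (n : ℕ) : r n ≤ a₁ - n * (δ / a₁) := by
    induction n with
    | zero => simp [r]
    | succ n ih =>
      have hx : r n ≤ a₁ := ih.trans (sub_le_self _ (by positivity))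
      have hsq : r (n + 1) * r n ≤ r n * r n - δ := by
        nlinarith [hr_mul n, sq_nonneg (r n - a₁ / 2)]
      have hδx : δ / a₁ * r n ≤ δ := by
        rw [div_mul_eq_mul_div, div_le_iff₀ ha₁]; nlinarith
      have : r (n + 1) ≤ r n - δ / a₁ := by
        nlinarith [hr_pos n]
      push_cast; linarith
  obtain ⟨n, hn⟩ := exists_nat_gt (a₁ / (δ / a₁))
  rw [div_lt_iff₀ (by positivity)] at hn
  linarith [hr_le n, hr_pos n]

lemma exists_pos_until_nonpos (ha₁ : 0 < a₁) (hd : a₁ ^ 2 + 4 * a₂ < 0) :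
    ∃ q, 1 ≤ q ∧ arCoeff a₁ a₂ (q + 1) ≤ 0 ∧ ∀ j ∈ Icc 1 q, 0 < arCoeff a₁ a₂ j := by
  classical
  have hex := exists_succ_nonpos ha₁ hd
  refine ⟨Nat.find hex, ?_, Nat.find_spec hex, fun j hj => ?_⟩
  · by_contra! h
    have := Nat.find_spec hex
    norm_num [Nat.lt_one_iff.mp h] at this
  · rw [mem_Icc] at hj
    obtain ⟨i, rfl⟩ : ∃ i, j = i + 1 := ⟨j - 1, by omega⟩
    exact not_le.mp (Nat.find_min hex (by omega))

end arCoeff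

lemma ar_eq_arCoeff_sum {a₁ a₂ : ℝ} {X Y : ℕ → ℝ} {m : ℕ}
    (hX : ∀ n, m < n → X n = a₁ * X (n - 1) + a₂ * X (n - 2) + Y n) (j : ℕ) :
    X (m + j) = arCoeff a₁ a₂ (j + 1) * X m + a₂ * arCoeff a₁ a₂ j * X (m - 1) +
      ∑ i ∈ Icc 1 j, arCoeff a₁ a₂ (j - i + 1) * Y (m + i) := by
  induction j using Nat.twoStepInduction with
  | zero => simp
  | one =>
    rw [hX (m + 1) (by omega), show m + 1 - 2 = m - 1 by omega]
    simp [arCoeff.add_two]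
  | more j ih₀ ih₁ =>
    have hsum : ∑ i ∈ Icc 1 j, arCoeff a₁ a₂ (j + 2 - i + 1) * Y (m + i)
        = a₁ * ∑ i ∈ Icc 1 j, arCoeff a₁ a₂ (j + 1 - i + 1) * Y (m + i)
          + a₂ * ∑ i ∈ Icc 1 j, arCoeff a₁ a₂ (j - i + 1) * Y (m + i) := by
      rw [mul_sum, mul_sum, ← sum_add_distrib]
      refine sum_congr rfl fun i hi => ?_
      rw [mem_Icc] at hi
      rw [show j + 2 - i + 1 = j - i + 1 + 2 by omega, show j + 1 - i + 1 = j - i + 1 + 1 by omega,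
        arCoeff.add_two]
      ring
    rw [hX (m + (j + 2)) (by omega), show m + (j + 2) - 1 = m + (j + 1) by omega,
      show m + (j + 2) - 2 = m + j by omega, ih₀, ih₁,
      sum_Icc_succ_top (by omega : 1 ≤ j + 2), sum_Icc_succ_top (by omega : 1 ≤ j + 1),
      sum_Icc_succ_top (by omega : 1 ≤ j + 1), hsum,
      show j + 2 - (j + 1) + 1 = 2 by omega, show j + 1 - (j + 1) + 1 = 1 by omega,
      show j + 2 - (j + 2) + 1 = 1 by omega, arCoeff.add_two (j + 1), arCoeff.add_two j]
    simp only [arCoeff.one, arCoeff.two]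
    ring

lemma ar_pos_of_block_pos {a₁ a₂ : ℝ} (ha₂ : a₂ ≤ 0) {q : ℕ} (hq : 1 ≤ q)
    (hq_nonpos : arCoeff a₁ a₂ (q + 1) ≤ 0) (hq_pos : ∀ j ∈ Icc 1 q, 0 < arCoeff a₁ a₂ j)
    {X Y : ℕ → ℝ} {m : ℕ} (hX : ∀ n, m < n → X n = a₁ * X (n - 1) + a₂ * X (n - 2) + Y n)
    (hXm : X m ≤ 0) (hXm' : X (m - 1) ≤ 0) (hY : ∀ i ∈ Icc 1 q, 0 < Y (m + i)) :
    0 < X (m + q) := by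
  have hfree : 0 ≤ arCoeff a₁ a₂ (q + 1) * X m + a₂ * arCoeff a₁ a₂ q * X (m - 1) :=
    add_nonneg (mul_nonneg_of_nonpos_of_nonpos hq_nonpos hXm)
      (mul_nonneg_of_nonpos_of_nonpos
        (mul_nonpos_of_nonpos_of_nonneg ha₂ (hq_pos q (by simp [hq])).le) hXm')
  have hforced : 0 < ∑ i ∈ Icc 1 q, arCoeff a₁ a₂ (q - i + 1) * Y (m + i) := by
    refine sum_pos (fun i hi => mul_pos (hq_pos _ ?_) (hY i hi)) ⟨1, by simp [hq]⟩
    rw [mem_Icc] at hi ⊢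
    omega
  rw [ar_eq_arCoeff_sum hX]
  linarith

lemma ar_exists_block_nonpos {a₁ a₂ : ℝ} (ha₂ : a₂ ≤ 0) {q : ℕ} (hq : 1 ≤ q)
    (hq_nonpos : arCoeff a₁ a₂ (q + 1) ≤ 0) (hq_pos : ∀ j ∈ Icc 1 q, 0 < arCoeff a₁ a₂ j)
    {X Y : ℕ → ℝ} (hX₀ : X 0 = 0)
    (hX : ∀ n, 1 ≤ n → X n = a₁ * X (n - 1) + a₂ * X (n - 2) + Y n)
    {N : ℕ} (hN : ∀ n ∈ Icc 1 N, X n ≤ 0) {m : ℕ} (hm : m + q ≤ N) :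
    ∃ i ∈ Ioc m (m + q), Y i ≤ 0 := by
  have hnonpos (n : ℕ) (hn : n ≤ N) : X n ≤ 0 := by
    rcases Nat.eq_zero_or_pos n with rfl | hn₀
    · exact hX₀.le
    · exact hN n (mem_Icc.mpr ⟨hn₀, hn⟩)
  by_contra! hY
  refine (hnonpos (m + q) hm).not_gt (ar_pos_of_block_pos ha₂ hq hq_nonpos hq_pos
    (fun n hn => hX n (by omega)) (hnonpos m (by omega)) (hnonpos (m - 1) (by omega))
    fun i hi => hY (m + i) ?_)
  rw [mem_Icc] at hi
  rw [mem_Ioc]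
  omega

lemma ProbabilityTheory.iIndep.measure_biInter_range {Ω ι : Type*} {mΩ : MeasurableSpace Ω}
    {μ : Measure Ω} [IsProbabilityMeasure μ] {m : ι → MeasurableSpace Ω} (h_le : ∀ i, m i ≤ mΩ)
    (h_indep : iIndep m μ) {S : ℕ → Set ι} (hS : Pairwise (Disjoint on S)) {A : ℕ → Set Ω}
    (hA : ∀ k, MeasurableSet[⨆ i ∈ S k, m i] (A k)) (K : ℕ) :
    μ (⋂ k ∈ range K, A k) = ∏ k ∈ range K, μ (A k) := by
  induction K with
  | zero => simp
  | succ K ih =>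
    have hdisj : Disjoint (S K) (⋃ k ∈ range K, S k) :=
      Set.disjoint_iUnion₂_right.mpr fun k hk => hS (mem_range.mp hk).ne'
    have hpast : MeasurableSet[⨆ i ∈ ⋃ k ∈ range K, S k, m i] (⋂ k ∈ range K, A k) :=
      .biInter (Set.to_countable _) fun k hk =>
        biSup_mono (f := m) (Set.subset_biUnion_of_mem (u := S) hk) _ (hA k)
    rw [range_add_one, set_biInter_insert, prod_insert notMem_range_self,
      (Indep_iff _ _ μ).mp (indep_iSup_of_disjoint h_le h_indep hdisj) _ _ (hA K) hpast, ih]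

lemma ProbabilityTheory.iIndepFun.measure_biInter_compl_block_eq {Ω β : Type*}
    {mΩ : MeasurableSpace Ω} {μ : Measure Ω} [IsProbabilityMeasure μ] {mβ : MeasurableSpace β}
    {Y : ℕ → Ω → β} (hmeas : ∀ n, Measurable (Y n)) (hindep : iIndepFun Y μ)
    {s : Set β} (hs : MeasurableSet s) {p : ENNReal} (hp : ∀ i, μ (Y i ⁻¹' s) = p) (q K : ℕ) :
    μ (⋂ k ∈ range K, (⋂ i ∈ Ioc (k * q) ((k + 1) * q), Y i ⁻¹' s)ᶜ) = (1 - p ^ q) ^ K := by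
  have hcomap (i : ℕ) : MeasurableSet[MeasurableSpace.comap (Y i) mβ] (Y i ⁻¹' s) := ⟨s, hs, rfl⟩
  have hblock (k : ℕ) : μ (⋂ i ∈ Ioc (k * q) ((k + 1) * q), Y i ⁻¹' s) = p ^ q := by
    rw [hindep.meas_biInter fun i _ => hcomap i, prod_congr rfl fun i _ => hp i, prod_const,
      Nat.card_Ioc, add_one_mul, Nat.add_sub_cancel_left]
  have hdisj : Pairwise (Disjoint on fun k => (Ioc (k * q) ((k + 1) * q) : Set ℕ)) := by
    have hmono : Monotone (· * q) := fun _ _ h => Nat.mul_le_mul_right q h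
    simpa [Order.succ_eq_add_one] using hmono.pairwise_disjoint_on_Ioc_succ
  rw [hindep.iIndep.measure_biInter_range (fun i => (hmeas i).comap_le) hdisj, prod_congr rfl
    fun k _ => by rw [prob_compl_eq_one_sub (measurableSet_biInter _ fun i _ => hmeas i hs),
      hblock], prod_const, card_range]
  refine fun k => (MeasurableSet.biInter (Set.to_countable _) fun i hi => ?_).compl
  exact le_biSup (fun i => MeasurableSpace.comap (Y i) mβ) hi _ (hcomap i)

lemma ENNReal.exists_pow_div_le_ofReal_exp {ρ : ENNReal} (hρ : ρ < 1) {q : ℕ} (hq : 0 < q) :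
    ∃ lam > (0 : ℝ), ∀ N, q ≤ N → ρ ^ (N / q) ≤ ENNReal.ofReal (Real.exp (-lam * N)) := by
  set r := max ρ.toReal (1 / 2)
  have hr₀ : 0 < r := lt_max_of_lt_right (by norm_num)
  have hr₁ : r < 1 := max_lt (ENNReal.toReal_lt_of_lt_ofReal (by simpa using hρ)) (by norm_num)
  have hlog : 0 < -Real.log r := neg_pos.mpr (Real.log_neg hr₀ hr₁)
  have hρr : ρ ≤ ENNReal.ofReal r :=
    (ENNReal.ofReal_toReal hρ.ne_top).symm.le.trans (ENNReal.ofReal_le_ofReal (le_max_left _ _))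
  refine ⟨-Real.log r / (2 * q), by positivity, fun N hN => ?_⟩
  -- `N < (N / q + 1) * q ≤ 2 * q * (N / q)` since `N / q ≥ 1`
  have hN_le : (N : ℝ) ≤ 2 * q * (N / q : ℕ) := by
    have h₁ := Nat.lt_div_mul_add (a := N) hq
    have h₂ : 1 ≤ N / q := (Nat.one_le_div_iff hq).mpr hN
    have : N ≤ 2 * q * (N / q) := by nlinarith
    exact_mod_cast this
  have hpow : r ^ (N / q) = Real.exp ((N / q : ℕ) * Real.log r) := by
    rw [Real.exp_nat_mul, Real.exp_log hr₀]
  calc ρ ^ (N / q) ≤ ENNReal.ofReal (r ^ (N / q)) := by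
        rw [ENNReal.ofReal_pow hr₀.le]; exact pow_le_pow_left' hρr _
    _ ≤ ENNReal.ofReal (Real.exp (-(-Real.log r / (2 * q)) * N)) := by
      rw [hpow]
      refine ENNReal.ofReal_le_ofReal (Real.exp_le_exp.mpr ?_)
      rw [neg_div, neg_neg, div_mul_eq_mul_div, le_div_iff₀ (by positivity)]
      nlinarith

theorem stmt_13 {Ω : Type*} [MeasureSpace Ω] [IsProbabilityMeasure (ℙ : Measure Ω)]
    (a1 a2 : ℝ) (ha1 : 0 < a1) (hd : a1 ^ 2 + 4 * a2 < 0)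
    (Y : ℕ → Ω → ℝ) (hmeas : ∀ n, Measurable (Y n))
    (hindep : iIndepFun Y ℙ)
    (hident : ∀ n, IdentDistrib (Y n) (Y 1) ℙ ℙ)
    (hpos : 0 < ℙ {ω | 0 < Y 1 ω})
    (X : ℕ → Ω → ℝ) (hX0 : ∀ ω, X 0 ω = 0)
    (hXrec : ∀ n, 1 ≤ n → ∀ ω,
      X n ω = a1 * X (n - 1) ω + a2 * X (n - 2) ω + Y n ω) :
    ∃ lam > (0 : ℝ), ∃ N0 : ℕ, ∀ N, N0 ≤ N →
      ℙ {ω | ∀ n ∈ Finset.Icc 1 N, X n ω ≤ 0} ≤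
        ENNReal.ofReal (Real.exp (-lam * N)) := by
  obtain ⟨q, hq, hq_nonpos, hq_pos⟩ := arCoeff.exists_pos_until_nonpos ha1 hd
  have ha2 : a2 ≤ 0 := by nlinarith
  set p := ℙ {ω | 0 < Y 1 ω}
  have hp (i : ℕ) : ℙ (Y i ⁻¹' Set.Ioi 0) = p := (hident i).measure_mem_eq measurableSet_Ioi
  have hρ : 1 - p ^ q < 1 :=
    ENNReal.sub_lt_self ENNReal.one_ne_top one_ne_zero (pow_ne_zero _ hpos.ne')
  obtain ⟨lam, hlam, hdecay⟩ := ENNReal.exists_pow_div_le_ofReal_exp hρ hq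
  refine ⟨lam, hlam, q, fun N hN => ?_⟩
  have hsub : {ω | ∀ n ∈ Icc 1 N, X n ω ≤ 0} ⊆
      ⋂ k ∈ range (N / q), (⋂ i ∈ Ioc (k * q) ((k + 1) * q), Y i ⁻¹' Set.Ioi 0)ᶜ := by
    intro ω hω
    simp only [Set.mem_iInter, Set.mem_compl_iff, mem_range]
    intro k hk hblock
    have hkN : k * q + q ≤ N := by
      rw [← add_one_mul]; exact (Nat.le_div_iff_mul_le hq).mp hk
    obtain ⟨i, hi, hYi⟩ := ar_exists_block_nonpos ha2 hq hq_nonpos hq_pos (hX0 ω)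
      (fun n hn => hXrec n hn ω) hω hkN
    exact hYi.not_gt (hblock i (by rwa [add_one_mul]))
  calc ℙ {ω | ∀ n ∈ Icc 1 N, X n ω ≤ 0}
      ≤ (1 - p ^ q) ^ (N / q) :=
        (measure_mono hsub).trans_eq
          (hindep.measure_biInter_compl_block_eq hmeas measurableSet_Ioi hp q _)
    _ ≤ _ := hdecay N hN
end

section
/- Let $a_1, a_2$ satisfy $a_1^2 + 4a_2 < 0$ and $a_1 > 0$. Let $(c_n)$ be given by $c_n = |a_2|^{n/2}(\cos(n\varphi) + (a_1/\tilde h)\sin(n\varphi))$ with $\tilde h = \sqrt{-(a_1^2+4a_2)}$ and $\varphi = \arctan(\tilde h/a_1) \in (0, \pi/2)$. Then there exists $n \le \lceil \pi/\varphi \rceil$ with $c_n \le 0$. -/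
theorem stmt_14 (a1 a2 : ℝ) (ha1 : 0 < a1) (hd : a1 ^ 2 + 4 * a2 < 0)
    (th φ : ℝ) (hth : th = Real.sqrt (-(a1 ^ 2 + 4 * a2)))
    (hφ : φ = Real.arctan (th / a1))
    (hφmem : φ ∈ Set.Ioo 0 (Real.pi / 2))
    (c : ℕ → ℝ)
    (hc : ∀ n : ℕ, c n = |a2| ^ ((n : ℝ) / 2) *
      (Real.cos (n * φ) + (a1 / th) * Real.sin (n * φ))) :
    ∃ n : ℕ, n ≤ ⌈Real.pi / φ⌉₊ ∧ c n ≤ 0 := by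
  obtain ⟨hφ0, hφhalf⟩ := hφmem
  have hth0 : 0 < th := by
    rw [hth]; exact Real.sqrt_pos.2 (by linarith)
  set n := ⌈Real.pi / φ⌉₊ with hn
  refine ⟨n, le_refl _, ?_⟩
  have hπ : 0 < Real.pi := Real.pi_pos
  have h1 : Real.pi ≤ n * φ := by
    have := Nat.le_ceil (Real.pi / φ)
    calc Real.pi = (Real.pi / φ) * φ := by field_simp
    _ ≤ (n : ℝ) * φ := by
        apply mul_le_mul_of_nonneg_right this hφ0.le
  have h2 : (n : ℝ) * φ < 3 * Real.pi / 2 := by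
    have hlt : (n : ℝ) < Real.pi / φ + 1 := by
      exact_mod_cast Nat.ceil_lt_add_one (by positivity)
    have : (n : ℝ) * φ < (Real.pi / φ + 1) * φ := by
      apply mul_lt_mul_of_pos_right hlt hφ0
    have heq : (Real.pi / φ + 1) * φ = Real.pi + φ := by field_simp
    linarith
  have hcos : Real.cos (n * φ) ≤ 0 := by
    apply Real.cos_nonpos_of_pi_div_two_le_of_le <;> linarith
  have hsin : Real.sin (n * φ) ≤ 0 := by
    have h := Real.sin_nonneg_of_nonneg_of_le_pi (x := n * φ - Real.pi)
      (by linarith) (by linarith)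
    rw [Real.sin_sub_pi] at h
    linarith
  rw [hc]
  apply mul_nonpos_of_nonneg_of_nonpos
  · positivity
  · have : 0 < a1 / th := by positivity
    nlinarith
end

section
/- Let $(Y_n)_{n\ge 1}$ be i.i.d. and let $X$ be the AR($p$)-process $X_n = \sum_{k=1}^p a_k X_{n-k} + Y_n$ (with $X_n = 0$ for $n\le 0$), where $\sum_{k=1}^p |a_k| < 1$ and $a_k > 0$ for at least one $k$. Let $a_+ = \sum_{k: a_k > 0} a_k$ and $a_- = \sum_{k: a_k < 0} a_k$. Then for every $\alpha < 0$, $\Pr(\max_{1\le n\le N} X_n \le 0) \ge \Pr(Y_1 \in [\alpha, 0]) \cdot \Pr(Y_1 \in [\alpha(1-a_+), \alpha |a_-|])^{N-1}$ for all $N \ge 1$. -/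
open MeasureTheory ProbabilityTheory Finset

/-!
If `X_{n-1}, …, X_{n-p}` all lie in `[α, 0]`, the autoregressive part `∑ a_k X_{n-k}` lies in
`[α a₊, α a₋]`, so an innovation `Y_n ∈ [α (1 - a₊), α |a₋|]` keeps `X_n` in `[α, 0]`. Starting from
`Y_1 ∈ [α, 0]`, the event that all innovations stay in these intervals forces `max_{n ≤ N} X_n ≤ 0`,
and by independence and identical distribution its probability is the stated product.
-/

lemma mul_mem_Icc_of_mem_Icc (a : ℝ) {l u x : ℝ} (hx : x ∈ Set.Icc l u) :
    a * x ∈ Set.Icc ((if 0 < a then a else 0) * l + (if a < 0 then a else 0) * u)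
      ((if 0 < a then a else 0) * u + (if a < 0 then a else 0) * l) := by
  obtain ⟨hl, hu⟩ := hx
  rcases lt_trichotomy a 0 with ha | rfl | ha
  · simp only [if_neg ha.not_gt, if_pos ha]
    constructor <;> nlinarith
  · simp
  · simp only [if_pos ha, if_neg ha.not_gt]
    constructor <;> nlinarith

lemma sum_mul_mem_Icc_of_mem_Icc {ι : Type*} (s : Finset ι) (a x : ι → ℝ) {l u : ℝ}
    (hx : ∀ k ∈ s, x k ∈ Set.Icc l u) :
    ∑ k ∈ s, a k * x k ∈ Set.Icc
      ((∑ k ∈ s with 0 < a k, a k) * l + (∑ k ∈ s with a k < 0, a k) * u)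
      ((∑ k ∈ s with 0 < a k, a k) * u + (∑ k ∈ s with a k < 0, a k) * l) := by
  simp only [sum_filter, sum_mul, ← sum_add_distrib]
  exact ⟨sum_le_sum fun k hk => (mul_mem_Icc_of_mem_Icc (a k) (hx k hk)).1,
    sum_le_sum fun k hk => (mul_mem_Icc_of_mem_Icc (a k) (hx k hk)).2⟩

lemma ar_mem_Icc_of_innovations_mem_Icc (p : ℕ) (a x y : ℕ → ℝ) (hx0 : x 0 = 0)
    (hrec : ∀ n, 1 ≤ n → x n = ∑ k ∈ Icc 1 p, a k * x (n - k) + y n)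
    {α : ℝ} (hα : α ≤ 0) {N : ℕ} (hy1 : y 1 ∈ Set.Icc α 0)
    (hy : ∀ k ∈ Icc 2 N, y k ∈ Set.Icc (α * (1 - ∑ k ∈ Icc 1 p with 0 < a k, a k))
      (α * |∑ k ∈ Icc 1 p with a k < 0, a k|)) :
    ∀ n ≤ N, x n ∈ Set.Icc α 0 := by
  intro n
  induction n using Nat.strong_induction_on with
  | _ n ih =>
    intro hn
    rcases Nat.lt_trichotomy n 1 with hn0 | rfl | hn2
    · rw [Nat.lt_one_iff.mp hn0, hx0]
      exact ⟨hα, le_rfl⟩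
    · have hpast : ∑ k ∈ Icc 1 p, a k * x (1 - k) = 0 := sum_eq_zero fun k hk => by
        rw [Nat.sub_eq_zero_of_le (mem_Icc.mp hk).1, hx0, mul_zero]
      rwa [hrec 1 le_rfl, hpast, zero_add]
    · have hpast : ∀ k ∈ Icc 1 p, x (n - k) ∈ Set.Icc α 0 := fun k hk =>
        ih _ (Nat.sub_lt (by omega) (mem_Icc.mp hk).1) (by omega)
      obtain ⟨hsl, hsu⟩ := sum_mul_mem_Icc_of_mem_Icc _ a _ hpast
      obtain ⟨hyl, hyu⟩ := hy n (mem_Icc.mpr ⟨hn2, hn⟩)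
      have hneg : ∑ k ∈ Icc 1 p with a k < 0, a k ≤ 0 :=
        sum_nonpos fun k hk => (mem_filter.mp hk).2.le
      rw [abs_of_nonpos hneg] at hyu
      rw [hrec n (by omega)]
      constructor <;> nlinarith

lemma measure_preimage_inter_biInter_preimage_eq_mul_pow {Ω : Type*} [MeasurableSpace Ω]
    {μ : Measure Ω} {Y : ℕ → Ω → ℝ} (hindep : iIndepFun Y μ)
    (hident : ∀ n, IdentDistrib (Y n) (Y 1) μ μ) {A B : Set ℝ} (hA : MeasurableSet A)
    (hB : MeasurableSet B) (N : ℕ) :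
    μ (Y 1 ⁻¹' A ∩ ⋂ k ∈ Icc 2 N, Y k ⁻¹' B) = μ (Y 1 ⁻¹' A) * μ (Y 1 ⁻¹' B) ^ (N - 1) := by
  have h1 : (1 : ℕ) ∉ Icc 2 N := by simp
  let S : ℕ → Set ℝ := Function.update (fun _ => B) 1 A
  have hS : ∀ k ∈ Icc 2 N, S k = B := fun k hk => Function.update_of_ne (by grind) _ _
  have key := hindep.meas_biInter (S := insert 1 (Icc 2 N)) (s := fun k => Y k ⁻¹' S k)
    fun k _ => ⟨S k, by by_cases hk : k = 1 <;> simp [S, hk, hA, hB], rfl⟩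
  rw [set_biInter_insert, prod_insert h1, prod_congr rfl fun k hk => by rw [hS k hk],
    prod_congr rfl fun k _ => (hident k).measure_mem_eq hB, prod_const, Nat.card_Icc,
    Set.iInter₂_congr fun k hk => by rw [hS k hk]] at key
  simpa [S] using key

theorem stmt_15_general {Ω : Type*} [MeasureSpace Ω]
    (p : ℕ) (a : ℕ → ℝ)
    (Y : ℕ → Ω → ℝ)
    (hindep : iIndepFun Y ℙ)
    (hident : ∀ n, IdentDistrib (Y n) (Y 1) ℙ ℙ)
    (X : ℕ → Ω → ℝ) (hX0 : ∀ ω, X 0 ω = 0)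
    (hXrec : ∀ n, 1 ≤ n → ∀ ω,
      X n ω = ∑ k ∈ Finset.Icc 1 p, a k * X (n - k) ω + Y n ω)
    (aplus aminus : ℝ)
    (haplus : aplus = ∑ k ∈ (Finset.Icc 1 p).filter (fun k => 0 < a k), a k)
    (haminus : aminus = ∑ k ∈ (Finset.Icc 1 p).filter (fun k => a k < 0), a k) :
    ∀ α : ℝ, α < 0 → ∀ N : ℕ, 1 ≤ N →
      ℙ {ω | Y 1 ω ∈ Set.Icc α 0} *
        ℙ {ω | Y 1 ω ∈ Set.Icc (α * (1 - aplus)) (α * |aminus|)} ^ (N - 1) ≤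
      ℙ {ω | ∀ n ∈ Finset.Icc 1 N, X n ω ≤ 0} := by
  intro α hα N _
  subst haplus haminus
  refine (measure_preimage_inter_biInter_preimage_eq_mul_pow hindep hident measurableSet_Icc
    measurableSet_Icc N).symm.trans_le <| measure_mono fun ω ⟨hY1, hY⟩ n hn => ?_
  simp only [Set.mem_iInter] at hY
  exact (ar_mem_Icc_of_innovations_mem_Icc p a (X · ω) (Y · ω) (hX0 ω) (fun n hn => hXrec n hn ω)
    hα.le hY1 hY n (mem_Icc.mp hn).2).2

theorem stmt_15 {Ω : Type*} [MeasureSpace Ω] [IsProbabilityMeasure (ℙ : Measure Ω)]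
    (p : ℕ) (hp : 1 ≤ p) (a : ℕ → ℝ)
    (hsum : ∑ k ∈ Finset.Icc 1 p, |a k| < 1)
    (hposk : ∃ k ∈ Finset.Icc 1 p, 0 < a k)
    (Y : ℕ → Ω → ℝ) (hmeas : ∀ n, Measurable (Y n))
    (hindep : iIndepFun Y ℙ)
    (hident : ∀ n, IdentDistrib (Y n) (Y 1) ℙ ℙ)
    (X : ℕ → Ω → ℝ) (hX0 : ∀ ω, X 0 ω = 0)
    (hXrec : ∀ n, 1 ≤ n → ∀ ω,
      X n ω = ∑ k ∈ Finset.Icc 1 p, a k * X (n - k) ω + Y n ω)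
    (aplus aminus : ℝ)
    (haplus : aplus = ∑ k ∈ (Finset.Icc 1 p).filter (fun k => 0 < a k), a k)
    (haminus : aminus = ∑ k ∈ (Finset.Icc 1 p).filter (fun k => a k < 0), a k) :
    ∀ α : ℝ, α < 0 → ∀ N : ℕ, 1 ≤ N →
      ℙ {ω | Y 1 ω ∈ Set.Icc α 0} *
        ℙ {ω | Y 1 ω ∈ Set.Icc (α * (1 - aplus)) (α * |aminus|)} ^ (N - 1) ≤
      ℙ {ω | ∀ n ∈ Finset.Icc 1 N, X n ω ≤ 0} :=
  stmt_15_general p a Y hindep hident X hX0 hXrec aplus aminus haplus haminus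
end

section
/- Let $\rho > 1$, let $(\alpha_n)_{n\ge 0}$ be positive reals with $l \le \alpha_n \le u$ for constants $0 < l \le u < \infty$, and let $(Y_n)_{n\ge 1}$ be i.i.d. with $\Pr(Y_1 < 0) > 0$ and $\Pr(Y_1 \ge x) \le C(\log x)^{-\alpha}$ for large $x$, with $\alpha > 1$. Define $X_n = \sum_{k=1}^n \rho^{n-k}\alpha_{n-k} Y_k$. Then there is $c > 0$ such that $\Pr\big(\bigcap_{n=1}^\infty \{X_n \le -c\rho^{n-1}\}\big) > 0$. In particular $\Pr(\sup_{n\ge 1} X_n \le 0) > 0$. -/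
/-!
If `Y₁ ≤ b < 0` and `Y_k ≤ ε σ^k` for `k ≥ 2`, with `1 < σ < ρ`, the first summand
`ρ^{n-1} α_{n-1} Y₁ ≤ l b ρ^{n-1}` of `X_n` dominates: the other summands add up to at most
`u ε σ² / (ρ - σ) · ρ^{n-1}`, which is `-l b / 2 · ρ^{n-1}` for a suitable `ε`.
The log-tail bound makes `Pr(Y_k > ε σ^k) = O(k^{-α})` summable, and independent events of
positive probability whose complements have summable probabilities occur simultaneously with
positive probability: a finite block of them has positive (product) probability, and the
remaining ones, independent of that block, all occur with probability `≥ 1 - ∑ Pr(failure) > 0`.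
-/
open MeasureTheory ProbabilityTheory Finset Filter
open scoped ENNReal

theorem MeasureTheory.exists_lt_measure_le_pos {Ω : Type*} {mΩ : MeasurableSpace Ω}
    {μ : Measure Ω} {f : Ω → ℝ} {a : ℝ} (h : μ {ω | f ω < a} ≠ 0) :
    ∃ b < a, 0 < μ {ω | f ω ≤ b} := by
  have hcover : {ω | f ω < a} ⊆ ⋃ n : ℕ, {ω | f ω ≤ a - 1 / (n + 1)} := fun ω hω => by
    obtain ⟨n, hn⟩ := exists_nat_one_div_lt (sub_pos.2 hω : 0 < a - f ω)
    exact Set.mem_iUnion.2 ⟨n, (by linarith : f ω ≤ a - 1 / ((n : ℝ) + 1))⟩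
  obtain ⟨n, hn⟩ := exists_measure_pos_of_not_measure_iUnion_null ((measure_mono_null hcover).mt h)
  exact ⟨_, sub_lt_self a Nat.one_div_pos_of_nat, hn⟩

theorem Real.summable_comp_mul_pow_of_le_log_rpow {f : ℝ → ℝ} {C x₀ α ε σ : ℝ}
    (hf0 : ∀ x, 0 ≤ f x) (hf : ∀ x, x₀ ≤ x → f x ≤ C * Real.log x ^ (-α)) (hα : 1 < α)
    (hε : 0 < ε) (hσ : 1 < σ) :
    Summable fun k : ℕ => f (ε * σ ^ k) := by
  set m := Real.log σ / 2
  have hm : 0 < m := half_pos (Real.log_pos hσ)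
  have hlarge : Tendsto (fun k : ℕ => ε * σ ^ k) atTop atTop :=
    (tendsto_pow_atTop_atTop_of_one_lt hσ).const_mul_atTop hε
  have hlog : ∀ᶠ k : ℕ in atTop, m * k ≤ Real.log (ε * σ ^ k) := by
    filter_upwards [tendsto_natCast_atTop_atTop.eventually_ge_atTop (-Real.log ε / m)] with k hk
    rw [Real.log_mul hε.ne' (by positivity), Real.log_pow]
    rw [div_le_iff₀ hm] at hk
    have hσm : (k : ℝ) * Real.log σ = 2 * (k * m) := by simp only [m]; ring
    linarith
  refine ((Real.summable_nat_rpow.2 (neg_lt_neg hα)).mul_left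
    (max C 0 * m ^ (-α))).of_norm_bounded_eventually_nat ?_
  filter_upwards [hlarge.eventually_ge_atTop x₀, hlog, eventually_gt_atTop 0] with k hx hk hk0
  have hmk : 0 < m * k := by positivity
  rw [Real.norm_of_nonneg (hf0 _)]
  calc f (ε * σ ^ k) ≤ C * Real.log (ε * σ ^ k) ^ (-α) := hf _ hx
    _ ≤ max C 0 * Real.log (ε * σ ^ k) ^ (-α) :=
      mul_le_mul_of_nonneg_right (le_max_left _ _) (Real.rpow_nonneg (hmk.le.trans hk) _)
    _ ≤ max C 0 * (m * k) ^ (-α) :=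
      mul_le_mul_of_nonneg_left (Real.rpow_le_rpow_of_nonpos hmk hk (by linarith))
        (le_max_right _ _)
    _ = max C 0 * m ^ (-α) * k ^ (-α) := by rw [Real.mul_rpow hm.le k.cast_nonneg]; ring

theorem sum_Icc_two_pow_sub_mul_pow_le {ρ σ : ℝ} (hσ : 0 < σ) (hσρ : σ < ρ) {n : ℕ} (hn : 1 ≤ n) :
    ∑ k ∈ Icc 2 n, ρ ^ (n - k) * σ ^ k ≤ σ ^ 2 / (ρ - σ) * ρ ^ (n - 1) := by
  have hρ : 0 < ρ := hσ.trans hσρ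
  set q := σ / ρ
  have hq : q < 1 := (div_lt_one hρ).2 hσρ
  have hterm : ∀ k ∈ Icc 2 n, ρ ^ (n - k) * σ ^ k = ρ ^ n * q ^ k := fun k hk => by
    rw [div_pow, ← pow_sub_mul_pow ρ (mem_Icc.1 hk).2]
    field_simp
  have hgeom : ∑ k ∈ Icc 2 n, q ^ k ≤ q ^ 2 / (1 - q) := by
    rw [← Ico_add_one_right_eq_Icc, geom_sum_Ico hq.ne (by omega), ← neg_div_neg_eq, neg_sub,
      neg_sub]
    gcongr
    linarith [pow_pos (div_pos hσ hρ) (n + 1)]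
  obtain ⟨m, rfl⟩ := Nat.exists_eq_add_of_le' hn
  calc ∑ k ∈ Icc 2 (m + 1), ρ ^ (m + 1 - k) * σ ^ k
      = ρ ^ (m + 1) * ∑ k ∈ Icc 2 (m + 1), q ^ k := by rw [sum_congr rfl hterm, mul_sum]
    _ ≤ ρ ^ (m + 1) * (q ^ 2 / (1 - q)) := by gcongr
    _ = σ ^ 2 / (ρ - σ) * ρ ^ (m + 1 - 1) := by
      simp only [q, Nat.add_sub_cancel]
      field_simp
      ring

theorem sum_Icc_pow_sub_mul_mul_le {ρ σ l u b ε : ℝ} (hσ : 0 < σ) (hσρ : σ < ρ) (hl : 0 ≤ l)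
    (hb : b ≤ 0) (hε : 0 ≤ ε) {A Y : ℕ → ℝ} (hA : ∀ n, l ≤ A n ∧ A n ≤ u) (hY₁ : Y 1 ≤ b)
    (hY : ∀ k, 2 ≤ k → Y k ≤ ε * σ ^ k) {n : ℕ} (hn : 1 ≤ n) :
    ∑ k ∈ Icc 1 n, ρ ^ (n - k) * A (n - k) * Y k ≤
      (l * b + u * ε * (σ ^ 2 / (ρ - σ))) * ρ ^ (n - 1) := by
  have hρ : 0 < ρ := hσ.trans hσρ
  have hu : 0 ≤ u := hl.trans ((hA 0).1.trans (hA 0).2)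
  have hfirst : A (n - 1) * Y 1 ≤ l * b := calc
    A (n - 1) * Y 1 ≤ l * Y 1 := mul_le_mul_of_nonpos_right (hA _).1 (hY₁.trans hb)
    _ ≤ l * b := mul_le_mul_of_nonneg_left hY₁ hl
  have hrest : ∀ k ∈ Icc 2 n, ρ ^ (n - k) * A (n - k) * Y k ≤ u * ε * (ρ ^ (n - k) * σ ^ k) :=
    fun k hk => by
      have hAY : A (n - k) * Y k ≤ u * (ε * σ ^ k) := by
        rcases le_total 0 (Y k) with hYk | hYk
        · exact mul_le_mul (hA _).2 (hY k (mem_Icc.1 hk).1) hYk hu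
        · exact (mul_nonpos_of_nonneg_of_nonpos (hl.trans (hA _).1) hYk).trans (by positivity)
      calc ρ ^ (n - k) * A (n - k) * Y k = ρ ^ (n - k) * (A (n - k) * Y k) := by ring
        _ ≤ ρ ^ (n - k) * (u * (ε * σ ^ k)) := by gcongr
        _ = u * ε * (ρ ^ (n - k) * σ ^ k) := by ring
  rw [← add_sum_Ioc_eq_sum_Icc hn, ← Icc_add_one_left_eq_Ioc]
  calc ρ ^ (n - 1) * A (n - 1) * Y 1 + ∑ k ∈ Icc (1 + 1) n, ρ ^ (n - k) * A (n - k) * Y k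
      ≤ ρ ^ (n - 1) * (l * b) + u * ε * ∑ k ∈ Icc 2 n, ρ ^ (n - k) * σ ^ k := by
        rw [mul_assoc, mul_sum]
        exact add_le_add (mul_le_mul_of_nonneg_left hfirst (by positivity)) (sum_le_sum hrest)
    _ ≤ ρ ^ (n - 1) * (l * b) + u * ε * (σ ^ 2 / (ρ - σ) * ρ ^ (n - 1)) := by
        gcongr
        exact sum_Icc_two_pow_sub_mul_pow_le hσ hσρ hn
    _ = (l * b + u * ε * (σ ^ 2 / (ρ - σ))) * ρ ^ (n - 1) := by ring

theorem sum_Icc_pow_sub_mul_mul_le_half {ρ σ l u b : ℝ} (hσ : 0 < σ) (hσρ : σ < ρ) (hl : 0 < l)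
    (hb : b ≤ 0) {A Y : ℕ → ℝ} (hA : ∀ n, l ≤ A n ∧ A n ≤ u) (hY₁ : Y 1 ≤ b)
    (hY : ∀ k, 2 ≤ k → Y k ≤ -(l * b) * (ρ - σ) / (2 * u * σ ^ 2) * σ ^ k) {n : ℕ}
    (hn : 1 ≤ n) :
    ∑ k ∈ Icc 1 n, ρ ^ (n - k) * A (n - k) * Y k ≤ l * b / 2 * ρ ^ (n - 1) := by
  have hu : 0 < u := hl.trans_le ((hA 0).1.trans (hA 0).2)
  have hρσ : 0 < ρ - σ := sub_pos.2 hσρ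
  refine (sum_Icc_pow_sub_mul_mul_le hσ hσρ hl.le hb (by
    have : 0 ≤ -(l * b) := by nlinarith
    positivity) hA hY₁ hY hn).trans_eq ?_
  field_simp
  ring

namespace ProbabilityTheory

variable {Ω ι : Type*} {mΩ : MeasurableSpace Ω} {μ : Measure Ω}

theorem iIndepSet.measure_iInter_pos [IsProbabilityMeasure μ] [Countable ι] {E : ι → Set Ω}
    (hE : iIndepSet E μ) (hmeas : ∀ i, MeasurableSet (E i)) (hpos : ∀ i, μ (E i) ≠ 0)
    (hsum : ∑' i, μ (E i)ᶜ ≠ ∞) : 0 < μ (⋂ i, E i) := by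
  obtain ⟨F, hF⟩ :=
    ((ENNReal.tendsto_tsum_compl_atTop_zero hsum).eventually (gt_mem_nhds one_pos)).exists
  set head := ⋂ i ∈ (F : Set ι), E i
  set tail := ⋂ i ∈ (F : Set ι)ᶜ, E i
  have hsplit : ⋂ i, E i = head ∩ tail := by
    ext ω
    simp only [head, tail, Set.mem_iInter, Set.mem_inter_iff]
    exact ⟨fun h => ⟨fun i _ => h i, fun i _ => h i⟩,
      fun h i => by by_cases hi : i ∈ (F : Set ι); exacts [h.1 i hi, h.2 i hi]⟩
  have hhead : μ head ≠ 0 := by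
    simp only [head, Finset.mem_coe]
    rw [hE.meas_biInter F]
    exact prod_ne_zero_iff.2 fun i _ => hpos i
  have htail_meas : MeasurableSet tail :=
    MeasurableSet.biInter (Set.to_countable _) fun i _ => hmeas i
  have htail : μ tail ≠ 0 := by
    intro h0
    have : 1 ≤ ∑' i : {x // x ∉ F}, μ (E i)ᶜ := calc
      1 = μ tailᶜ := by rw [prob_compl_eq_one_sub htail_meas, h0, tsub_zero]
      _ = μ (⋃ i : {x // x ∉ F}, (E i)ᶜ) := by
        congr 1; ext ω; simp [tail]
      _ ≤ _ := measure_iUnion_le _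
    exact (hF.trans_le this).false
  have hindep := hE.indep_generateFrom_of_disjoint hmeas (F : Set ι) (F : Set ι)ᶜ
    disjoint_compl_right
  rw [hsplit, (Indep_iff _ _ μ).1 hindep _ _
    (.biInter (Set.to_countable _) fun i hi => MeasurableSpace.measurableSet_generateFrom ⟨i, hi, rfl⟩)
    (.biInter (Set.to_countable _) fun i hi => MeasurableSpace.measurableSet_generateFrom ⟨i, hi, rfl⟩)]
  exact pos_iff_ne_zero.2 (mul_ne_zero hhead htail)


theorem iIndepFun.measure_forall_le_pos [IsProbabilityMeasure μ] [Countable ι] {Y : ι → Ω → ℝ}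
    (hmeas : ∀ i, Measurable (Y i)) (hindep : iIndepFun Y μ) {t : ι → ℝ}
    (hpos : ∀ i, μ {ω | Y i ω ≤ t i} ≠ 0) (hsum : Summable fun i => μ.real {ω | t i < Y i ω}) :
    0 < μ {ω | ∀ i, Y i ω ≤ t i} := by
  set E : ι → Set Ω := fun i => Y i ⁻¹' Set.Iic (t i)
  have hE_meas : ∀ i, MeasurableSet (E i) := fun i => hmeas i measurableSet_Iic
  have hE_indep : iIndepSet E μ := (iIndepSet_iff_meas_biInter hE_meas).2 fun s =>
    hindep.measure_inter_preimage_eq_mul s fun _ _ => measurableSet_Iic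
  have hE_sum : ∑' i, μ (E i)ᶜ ≠ ∞ := by
    have hcompl : ∀ i, μ (E i)ᶜ = ENNReal.ofReal (μ.real {ω | t i < Y i ω}) := fun i => by
      rw [ofReal_measureReal]; congr 1; ext ω; simp [E]
    rw [tsum_congr hcompl, ← ENNReal.ofReal_tsum_of_nonneg (fun _ => measureReal_nonneg) hsum]
    exact ENNReal.ofReal_ne_top
  rw [Set.ofPred_forall]
  exact hE_indep.measure_iInter_pos hE_meas hpos hE_sum

theorem summable_measureReal_lt_of_log_tail [IsFiniteMeasure μ] {Y : ℕ → Ω → ℝ} {Z : Ω → ℝ}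
    (hident : ∀ k, IdentDistrib (Y k) Z μ μ) {C x₀ α ε σ : ℝ}
    (htail : ∀ x, x₀ ≤ x → μ.real {ω | x ≤ Z ω} ≤ C * Real.log x ^ (-α)) (hα : 1 < α)
    (hε : 0 < ε) (hσ : 1 < σ) {t : ℕ → ℝ} (ht : ∀ᶠ k in atTop, t k = ε * σ ^ k) :
    Summable fun k => μ.real {ω | t k < Y k ω} := by
  refine (Real.summable_comp_mul_pow_of_le_log_rpow (fun _ => measureReal_nonneg) htail hα hε
    hσ).of_norm_bounded_eventually_nat ?_
  filter_upwards [ht] with k hk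
  rw [Real.norm_of_nonneg measureReal_nonneg, ← hk]
  calc μ.real {ω | t k < Y k ω} = μ.real {ω | t k < Z ω} :=
        congrArg ENNReal.toReal ((hident k).measure_mem_eq measurableSet_Ioi)
    _ ≤ μ.real {ω | t k ≤ Z ω} := measureReal_mono fun ω (hω : _ < Z ω) => hω.le

end ProbabilityTheory

theorem stmt_19 {Ω : Type*} [MeasureSpace Ω] [IsProbabilityMeasure (ℙ : Measure Ω)]
    (ρ : ℝ) (hρ : 1 < ρ)
    (A : ℕ → ℝ) (l u : ℝ) (hl : 0 < l) (hlu : l ≤ u)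
    (hA : ∀ n, l ≤ A n ∧ A n ≤ u)
    (Y : ℕ → Ω → ℝ) (hmeas : ∀ n, Measurable (Y n))
    (hindep : iIndepFun Y ℙ)
    (hident : ∀ n, IdentDistrib (Y n) (Y 1) ℙ ℙ)
    (hneg : 0 < ℙ {ω | Y 1 ω < 0})
    (α : ℝ) (hα : 1 < α)
    (htail : ∃ C : ℝ, ∃ x0 : ℝ, ∀ x : ℝ, x0 ≤ x →
      (ℙ {ω | x ≤ Y 1 ω}).toReal ≤ C * Real.log x ^ (-α))
    (X : ℕ → Ω → ℝ)
    (hX : ∀ n ω, X n ω = ∑ k ∈ Finset.Icc 1 n, ρ ^ (n - k) * A (n - k) * Y k ω) :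
    ∃ c > (0 : ℝ),
      0 < ℙ {ω | ∀ n : ℕ, 1 ≤ n → X n ω ≤ -c * ρ ^ (n - 1)} ∧
      0 < ℙ {ω | ∀ n : ℕ, 1 ≤ n → X n ω ≤ 0} := by
  obtain ⟨C, x₀, htail⟩ := htail
  obtain ⟨b, hb, hpb⟩ := exists_lt_measure_le_pos hneg.ne'
  obtain ⟨σ, hσ, hσρ⟩ := exists_between hρ
  set ε := -(l * b) * (ρ - σ) / (2 * u * σ ^ 2)
  have hε : 0 < ε := by
    have : 0 < u := hl.trans_le hlu
    exact div_pos (mul_pos (by nlinarith) (by linarith)) (by positivity)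
  set t : ℕ → ℝ := Function.update (fun k => ε * σ ^ k) 1 b
  have ht : ∀ k, k ≠ 1 → t k = ε * σ ^ k := fun k hk => Function.update_of_ne hk _ _
  have hpos : 0 < ℙ {ω | ∀ k, Y k ω ≤ t k} := by
    refine hindep.measure_forall_le_pos hmeas (fun k => ne_of_gt ?_)
      (summable_measureReal_lt_of_log_tail hident htail hα hε hσ
        (eventually_atTop.2 ⟨2, fun k hk => ht k (by omega)⟩))
    have hbt : b ≤ t k := by
      rcases eq_or_ne k 1 with rfl | hk
      · simp [t]
      · rw [ht k hk]; exact hb.le.trans (by positivity)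
    calc 0 < ℙ (Y 1 ⁻¹' Set.Iic b) := hpb
      _ = ℙ (Y k ⁻¹' Set.Iic b) := ((hident k).measure_mem_eq measurableSet_Iic).symm
      _ ≤ ℙ {ω | Y k ω ≤ t k} := measure_mono fun ω (hω : Y k ω ≤ b) => hω.trans hbt
  have hbound : {ω | ∀ k, Y k ω ≤ t k} ⊆
      {ω | ∀ n : ℕ, 1 ≤ n → X n ω ≤ -(-(l * b / 2)) * ρ ^ (n - 1)} := fun ω hY n hn => by
    rw [hX, neg_neg]
    exact sum_Icc_pow_sub_mul_mul_le_half (zero_lt_one.trans hσ) hσρ hl hb.le hA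
      (by simpa [t] using hY 1) (fun k hk => (ht k (by omega)) ▸ hY k) hn
  refine ⟨-(l * b / 2), by nlinarith, hpos.trans_le (measure_mono hbound),
    hpos.trans_le (measure_mono (hbound.trans fun ω hω n hn => (hω n hn).trans ?_))⟩
  exact mul_nonpos_of_nonpos_of_nonneg (by nlinarith) (pow_nonneg (by linarith) _)
end
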